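/- (Depth-first exploration: surplus edges point toward the root) In the depth-first exploration of a cluster rooted at x, every unexplored (surplus) edge e ∈ U_x can be written as e = {a,b} with a, b in the cluster, such that the unique path from a to x in the depth-first spanning tree T_x passes through b. -/

import Mathlib

/- STATEMENT 9: in the depth-first exploration rooted at `x`, every surplus edge
`e ∈ U_x` of the terminal state can be written as `{a,b}` with the unique path from
`a` to `x` in the depth-first spanning tree passing through `b`. -/

/-- State of the depth-first exploration: explored vertices `X`, tree edges `T`,
explored edges `E`, unexplored (surplus) edges `U`. -/
structure DFSState (V : Type) where
  X : Finset V
  T : Finset (Sym2 V)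
  E : Finset (Sym2 V)
  U : Finset (Sym2 V)

/-- The current spanning tree, as a graph. -/
def DFSState.tree {V : Type} (σ : DFSState V) : SimpleGraph V :=
  SimpleGraph.fromEdgeSet (↑σ.T)

/-- Active vertices: explored vertices with some incident edge of `G` neither
explored nor marked unexplored. -/
def DFSState.active {V : Type} [DecidableEq V] (G : SimpleGraph V) (σ : DFSState V) : Set V :=
  {a | a ∈ σ.X ∧ ∃ b, G.Adj a b ∧ s(a, b) ∉ σ.E ∪ σ.U}

/-- One step of the depth-first exploration of `G` with configuration `ω`, rooted at
`x`. -/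
def DFSStep {V : Type} [DecidableEq V] (G : SimpleGraph V) (ω : Sym2 V → Bool) (x : V)
    (σ σ' : DFSState V) : Prop :=
  ∃ a b, G.Adj a b ∧ a ∈ σ.X ∧ s(a, b) ∉ σ.E ∪ σ.U ∧
    (∀ a' ∈ σ.active G, σ.tree.dist x a' ≤ σ.tree.dist x a) ∧
    ((b ∈ σ.X ∧ σ' = ⟨σ.X, σ.T, σ.E, insert s(a, b) σ.U⟩) ∨
     (b ∉ σ.X ∧ ω s(a, b) = true ∧
        σ' = ⟨insert b σ.X, insert s(a, b) σ.T, insert s(a, b) σ.E, σ.U⟩) ∨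
     (b ∉ σ.X ∧ ω s(a, b) = false ∧ σ' = ⟨σ.X, σ.T, insert s(a, b) σ.E, σ.U⟩))

/-- Reachability from the initial state of the exploration rooted at `x`. -/
def DFSReachable {V : Type} [DecidableEq V] (G : SimpleGraph V) (ω : Sym2 V → Bool)
    (x : V) (σ : DFSState V) : Prop :=
  Relation.ReflTransGen (DFSStep G ω x) ⟨{x}, ∅, ∅, ∅⟩ σ

/-!
The exploration keeps an invariant: the tree is acyclic and joins every explored vertex to
the root, and any two active vertices lie on one root path, the shallower being an ancestor of
the deeper. A surplus edge `{a, b}` is recorded only when `a` is a deepest active vertex and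
`b` is active, so `b` lies on the tree path from `a` to `x`. A tree step hangs a fresh leaf `b`
below a deepest active vertex `a`; this keeps all old tree paths and depths, and `b` becomes the
unique deepest vertex with the old chain above it, so the invariant survives every step.
-/

namespace SimpleGraph

variable {V : Type} {G G' : SimpleGraph V} {a b u v w : V}

def OnPath (G : SimpleGraph V) (u v w : V) : Prop :=
  ∃ p : G.Walk u v, p.IsPath ∧ w ∈ p.support

lemma Reachable.onPath_start (h : G.Reachable u v) : G.OnPath u v u :=
  let ⟨p, hp, _⟩ := h.exists_path_of_dist; ⟨p, hp, p.start_mem_support⟩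

lemma OnPath.mono (hle : G ≤ G') : G.OnPath u v w → G'.OnPath u v w
  | ⟨p, hp, hw⟩ => ⟨p.mapLe hle, hp.mapLe hle, by rwa [Walk.support_mapLe_eq_support]⟩

lemma IsAcyclic.mem_support_of_onPath (hG : G.IsAcyclic) (h : G.OnPath u v w)
    (p : G.Walk u v) (hp : p.IsPath) : w ∈ p.support := by
  obtain ⟨q, hq, hw⟩ := h
  obtain rfl : p = q := congrArg Subtype.val ((hG.subsingleton_path u v).elim ⟨p, hp⟩ ⟨q, hq⟩)
  exact hw

lemma IsAcyclic.dist_eq_length (hG : G.IsAcyclic) {p : G.Walk u v} (hp : p.IsPath) :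
    G.dist u v = p.length := by
  obtain ⟨q, hq, hlen⟩ := p.reachable.exists_path_of_dist
  obtain rfl : p = q := congrArg Subtype.val ((hG.subsingleton_path u v).elim ⟨p, hp⟩ ⟨q, hq⟩)
  exact hlen.symm

lemma IsAcyclic.dist_eq_of_le (hG' : G'.IsAcyclic) (hle : G ≤ G') (h : G.Reachable u v) :
    G'.dist u v = G.dist u v := by
  obtain ⟨p, hp, hlen⟩ := h.exists_path_of_dist
  rw [hG'.dist_eq_length (hp.mapLe hle), Walk.length_mapLe, hlen]

lemma Walk.notMem_support_of_notMem_support (hb : b ∉ G.support) (hu : u ≠ b)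
    (p : G.Walk u v) : b ∉ p.support := by
  classical
  intro h
  have hq : ¬ (p.takeUntil b h).reverse.Nil := Walk.not_nil_of_ne hu.symm
  exact hb ⟨_, Walk.adj_snd hq⟩

lemma not_reachable_of_notMem_support (hb : b ∉ G.support) (hab : a ≠ b) :
    ¬ G.Reachable a b :=
  fun ⟨p⟩ => p.notMem_support_of_notMem_support hb hab p.end_mem_support

lemma adj_sup_edge_right (hab : a ≠ b) : (G ⊔ edge a b).Adj b a :=
  Or.inr ((edge_adj ..).2 ⟨Or.inr ⟨rfl, rfl⟩, hab.symm⟩)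

lemma support_sup_edge_subset : (G ⊔ edge a b).support ⊆ insert a (insert b G.support) := by
  rintro u ⟨w, hw | hw⟩
  · exact .inr (.inr ⟨w, hw⟩)
  · rcases ((edge_adj ..).1 hw).1 with ⟨rfl, -⟩ | ⟨rfl, -⟩
    · exact .inl rfl
    · exact .inr (.inl rfl)

lemma Walk.IsPath.exists_sup_edge (hb : b ∉ G.support) (hab : a ≠ b) {p : G.Walk a v}
    (hp : p.IsPath) : ∃ q : (G ⊔ edge a b).Walk b v,
      q.IsPath ∧ q.length = p.length + 1 ∧ q.support = b :: p.support := by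
  refine ⟨.cons (adj_sup_edge_right hab) (p.mapLe le_sup_left), ?_, by simp, by simp⟩
  rw [Walk.cons_isPath_iff, Walk.support_mapLe_eq_support]
  exact ⟨hp.mapLe _, p.notMem_support_of_notMem_support hb hab⟩

lemma OnPath.sup_edge (hb : b ∉ G.support) (hab : a ≠ b) :
    G.OnPath a v w → (G ⊔ edge a b).OnPath b v w
  | ⟨_, hp, hw⟩ =>
    let ⟨q, hq, _, hsupp⟩ := hp.exists_sup_edge hb hab
    ⟨q, hq, hsupp ▸ List.mem_cons_of_mem _ hw⟩

lemma IsAcyclic.dist_sup_edge (hG : (G ⊔ edge a b).IsAcyclic) (hb : b ∉ G.support)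
    (hab : a ≠ b) (h : G.Reachable a v) : (G ⊔ edge a b).dist b v = G.dist a v + 1 := by
  obtain ⟨p, hp, hlen⟩ := h.exists_path_of_dist
  obtain ⟨q, hq, hqlen, -⟩ := hp.exists_sup_edge hb hab
  rw [hG.dist_eq_length hq, hqlen, hlen]

end SimpleGraph

open SimpleGraph

section DFS

variable {V : Type} [DecidableEq V] {G : SimpleGraph V} {ω : Sym2 V → Bool} {x a b : V}
  {σ σ' : DFSState V}

lemma DFSState.mem_active_of_subset {u : V} (h : u ∈ σ'.active G) (hu : u ∈ σ.X)
    (hE : σ.E ⊆ σ'.E) (hU : σ.U ⊆ σ'.U) : u ∈ σ.active G :=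
  let ⟨_, c, hc, hnot⟩ := h
  ⟨hu, c, hc, fun hmem => hnot (Finset.union_subset_union hE hU hmem)⟩

lemma DFSState.tree_insert (σ : DFSState V) (a b : V) (X : Finset V) (E U : Finset (Sym2 V)) :
    DFSState.tree ⟨X, insert s(a, b) σ.T, E, U⟩ = σ.tree ⊔ edge a b := by
  rw [DFSState.tree, DFSState.tree, Finset.coe_insert, Set.insert_eq, fromEdgeSet_union, edge,
    sup_comm]

structure DFSInvariant (G : SimpleGraph V) (x : V) (σ : DFSState V) : Prop where
  support_tree_subset : σ.tree.support ⊆ σ.X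
  isAcyclic_tree : σ.tree.IsAcyclic
  reachable_root : ∀ u ∈ σ.X, σ.tree.Reachable u x
  onPath_of_mem_surplus : ∀ e ∈ σ.U, ∃ a b, e = s(a, b) ∧ a ∈ σ.X ∧ b ∈ σ.X ∧
    σ.tree.OnPath a x b
  onPath_of_active : ∀ u ∈ σ.active G, ∀ v ∈ σ.active G,
    σ.tree.dist x v ≤ σ.tree.dist x u → σ.tree.OnPath u x v

namespace DFSInvariant

lemma init : DFSInvariant G x ⟨{x}, ∅, ∅, ∅⟩ := by
  have htree : (⟨{x}, ∅, ∅, ∅⟩ : DFSState V).tree = ⊥ := by simp [DFSState.tree]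
  refine ⟨by simp [htree], htree ▸ isAcyclic_bot, ?_, by simp, ?_⟩
  · rintro u hu
    rw [Finset.mem_singleton.1 hu]
  · rintro u ⟨hu, -⟩ v ⟨hv, -⟩ -
    rw [Finset.mem_singleton.1 hu, Finset.mem_singleton.1 hv]
    exact Reachable.rfl.onPath_start

lemma closed_step (h : DFSInvariant G x σ) (e : Sym2 V) :
    DFSInvariant G x ⟨σ.X, σ.T, insert e σ.E, σ.U⟩ where
  __ := h
  onPath_of_active u hu v hv :=
    h.onPath_of_active u (DFSState.mem_active_of_subset hu hu.1 (Finset.subset_insert _ _) le_rfl)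
      v (DFSState.mem_active_of_subset hv hv.1 (Finset.subset_insert _ _) le_rfl)

lemma surplus_step (h : DFSInvariant G x σ) (ha : a ∈ σ.active G) (hb : b ∈ σ.active G)
    (hdist : σ.tree.dist x b ≤ σ.tree.dist x a) :
    DFSInvariant G x ⟨σ.X, σ.T, σ.E, insert s(a, b) σ.U⟩ where
  __ := h
  onPath_of_mem_surplus e he := by
    rcases Finset.mem_insert.1 he with rfl | he
    · exact ⟨a, b, rfl, ha.1, hb.1, h.onPath_of_active a ha b hb hdist⟩
    · exact h.onPath_of_mem_surplus e he
  onPath_of_active u hu v hv :=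
    h.onPath_of_active u (DFSState.mem_active_of_subset hu hu.1 le_rfl (Finset.subset_insert _ _))
      v (DFSState.mem_active_of_subset hv hv.1 le_rfl (Finset.subset_insert _ _))

lemma isAcyclic_sup_edge (h : DFSInvariant G x σ) (ha : a ∈ σ.X) (hb : b ∉ σ.X) :
    (σ.tree ⊔ edge a b).IsAcyclic :=
  h.isAcyclic_tree.sup_edge_of_not_reachable <| not_reachable_of_notMem_support
    (fun hb' => hb (h.support_tree_subset hb')) (fun hab => hb (hab ▸ ha))

lemma tree_step (h : DFSInvariant G x σ) (ha : a ∈ σ.active G)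
    (hmax : ∀ a' ∈ σ.active G, σ.tree.dist x a' ≤ σ.tree.dist x a) (hb : b ∉ σ.X) :
    DFSInvariant G x ⟨insert b σ.X, insert s(a, b) σ.T, insert s(a, b) σ.E, σ.U⟩ := by
  have hab : a ≠ b := fun hab => hb (hab ▸ ha.1)
  have hbT : b ∉ σ.tree.support := fun hb' => hb (h.support_tree_subset hb')
  have hacyc := h.isAcyclic_sup_edge ha.1 hb
  have hreach : ∀ u ∈ insert b σ.X, (σ.tree ⊔ edge a b).Reachable u x := by
    intro u hu
    rcases Finset.mem_insert.1 hu with rfl | hu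
    · exact (adj_sup_edge_right hab).reachable.trans ((h.reachable_root a ha.1).mono le_sup_left)
    · exact (h.reachable_root u hu).mono le_sup_left
  have hdist : ∀ w ∈ σ.X, (σ.tree ⊔ edge a b).dist x w = σ.tree.dist x w := fun w hw =>
    hacyc.dist_eq_of_le le_sup_left (h.reachable_root w hw).symm
  have hdist_b : (σ.tree ⊔ edge a b).dist x b = σ.tree.dist x a + 1 := by
    rw [dist_comm, hacyc.dist_sup_edge hbT hab (h.reachable_root a ha.1), dist_comm]
  have hactive : ∀ u ∈ DFSState.active G
      ⟨insert b σ.X, insert s(a, b) σ.T, insert s(a, b) σ.E, σ.U⟩, u ≠ b → u ∈ σ.active G :=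
    fun u hu hub => DFSState.mem_active_of_subset hu ((Finset.mem_insert.1 hu.1).resolve_left hub)
      (Finset.subset_insert _ _) le_rfl
  refine ⟨?_, ?_, ?_, ?_, ?_⟩ <;> simp only [DFSState.tree_insert]
  · intro u hu
    rcases support_sup_edge_subset hu with rfl | rfl | hu
    exacts [Finset.mem_insert_of_mem ha.1, Finset.mem_insert_self _ _,
      Finset.mem_insert_of_mem (h.support_tree_subset hu)]
  · exact hacyc
  · exact hreach
  · intro e he
    obtain ⟨a', b', rfl, ha', hb', hpath⟩ := h.onPath_of_mem_surplus e he
    exact ⟨a', b', rfl, Finset.mem_insert_of_mem ha', Finset.mem_insert_of_mem hb',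
      hpath.mono le_sup_left⟩
  · intro u hu v hv huv
    by_cases hvb : v = b
    · by_cases hub : u = b
      · rw [hub, hvb]
        exact (hreach b (Finset.mem_insert_self _ _)).onPath_start
      · have hu' := hactive u hu hub
        rw [hvb, hdist_b, hdist u hu'.1] at huv
        exact absurd (hmax u hu') (by omega)
    · have hv' := hactive v hv hvb
      by_cases hub : u = b
      · rw [hub]
        exact (h.onPath_of_active a ha v hv' (hmax v hv')).sup_edge hbT hab
      · have hu' := hactive u hu hub
        rw [hdist u hu'.1, hdist v hv'.1] at huv
        exact (h.onPath_of_active u hu' v hv' huv).mono le_sup_left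

lemma step (h : DFSInvariant G x σ) (hstep : DFSStep G ω x σ σ') : DFSInvariant G x σ' := by
  obtain ⟨a, b, hadj, haX, hnew, hmax, hcase⟩ := hstep
  have ha : a ∈ σ.active G := ⟨haX, b, hadj, hnew⟩
  rcases hcase with ⟨hbX, rfl⟩ | ⟨hbX, -, rfl⟩ | ⟨-, -, rfl⟩
  · have hb : b ∈ σ.active G := ⟨hbX, a, hadj.symm, by rwa [Sym2.eq_swap]⟩
    exact h.surplus_step ha hb (hmax b hb)
  · exact h.tree_step ha hmax hbX
  · exact h.closed_step _

lemma of_reachable (h : DFSReachable G ω x σ) : DFSInvariant G x σ := by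
  induction h with
  | refl => exact init
  | tail _ hstep ih => exact ih.step hstep

end DFSInvariant

end DFS

theorem stmt9_general {V : Type} [DecidableEq V]
    (G : SimpleGraph V) (ω : Sym2 V → Bool) (x : V) (σ : DFSState V)
    (hσ : DFSReachable G ω x σ) :
    ∀ e ∈ σ.U, ∃ a b : V, e = s(a, b) ∧ a ∈ σ.X ∧ b ∈ σ.X ∧
      ∀ p : σ.tree.Walk a x, p.IsPath → b ∈ p.support := by
  intro e he
  have h := DFSInvariant.of_reachable hσ
  obtain ⟨a, b, rfl, ha, hb, hpath⟩ := h.onPath_of_mem_surplus e he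
  exact ⟨a, b, rfl, ha, hb, h.isAcyclic_tree.mem_support_of_onPath hpath⟩

theorem stmt9 {V : Type} [Fintype V] [DecidableEq V]
    (G : SimpleGraph V) (ω : Sym2 V → Bool) (x : V) (σ : DFSState V)
    (hσ : DFSReachable G ω x σ)
    (hterm : ∀ σ' : DFSState V, ¬ DFSStep G ω x σ σ') :
    ∀ e ∈ σ.U, ∃ a b : V, e = s(a, b) ∧ a ∈ σ.X ∧ b ∈ σ.X ∧
      ∀ p : σ.tree.Walk a x, p.IsPath → b ∈ p.support :=
  stmt9_general G ω x σ hσ
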